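/- Let f : D̄ → ℝ satisfy |f(x) − f(y)| ≤ d(x,y) for all x, y ∈ D̄ (f is 1-Lipschitz) and |f(x) − f(y)| < d(x,y) for all distinct x, y ∈ D (f is contracting on the open hemisphere). Then for every x ∈ D and every y ∈ D̄ with y ≠ x one has |f(x) − f(y)| < d(x,y). (The paper's lemma: no point of a proper spacelike surface in ÃdS is causally related to a point of the closure of the surface on the conformal boundary.) -/
import Mathlib


open scoped RealInnerProductSpace

/-- The closed hemisphere `D̄ = {x ∈ S² : ⟪x,e⟫ ≥ 0}`. -/
def closedHemi (e : EuclideanSpace ℝ (Fin 3)) : Set (EuclideanSpace ℝ (Fin 3)) :=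
  {x | ‖x‖ = 1 ∧ 0 ≤ ⟪x, e⟫}

/-- The open hemisphere `D = {x ∈ S² : ⟪x,e⟫ > 0}`. -/
def openHemi (e : EuclideanSpace ℝ (Fin 3)) : Set (EuclideanSpace ℝ (Fin 3)) :=
  {x | ‖x‖ = 1 ∧ 0 < ⟪x, e⟫}

/-- If `f` is `1`-Lipschitz on the closed hemisphere `D̄` (for the
spherical distance `arccos ⟪·,·⟫`) and contracting on the open hemisphere `D`,
then for every `x ∈ D` and `y ∈ D̄` with `y ≠ x` one has
`|f x - f y| < arccos ⟪x, y⟫`: no point of a proper spacelike surface in `ÃdS` is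
causally related to a boundary point of its closure. -/
theorem contracting_up_to_boundary (e : EuclideanSpace ℝ (Fin 3)) (he : ‖e‖ = 1)
    (f : EuclideanSpace ℝ (Fin 3) → ℝ)
    (hLip : ∀ x ∈ closedHemi e, ∀ y ∈ closedHemi e,
      |f x - f y| ≤ Real.arccos ⟪x, y⟫)
    (hCon : ∀ x ∈ openHemi e, ∀ y ∈ openHemi e, x ≠ y →
      |f x - f y| < Real.arccos ⟪x, y⟫) :
    ∀ x ∈ openHemi e, ∀ y ∈ closedHemi e, y ≠ x →
      |f x - f y| < Real.arccos ⟪x, y⟫ := by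
  rintro x ⟨hx1, hxe⟩ y ⟨hy1, hye⟩ hne
  set c : ℝ := ⟪x, y⟫ with hc
  have habs : |c| ≤ 1 := by
    have := abs_real_inner_le_norm x y
    rwa [hx1, hy1, mul_one] at this
  have hcle : c ≤ 1 := (abs_le.mp habs).2
  have hcge : -1 ≤ c := (abs_le.mp habs).1
  have hc1 : c < 1 := by
    rcases lt_or_eq_of_le hcle with h | h
    · exact h
    · exact absurd (((inner_eq_one_iff_of_norm_eq_one hx1 hy1).mp h).symm) hne
  have hcm1 : -1 < c := by
    rcases lt_or_eq_of_le hcge with h | h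
    · exact h
    · exfalso
      have hny : ‖-y‖ = 1 := by rwa [norm_neg]
      have : ⟪x, -y⟫ = (1 : ℝ) := by
        rw [inner_neg_right, ← hc, ← h]; norm_num
      have hxy : x = -y := (inner_eq_one_iff_of_norm_eq_one hx1 hny).mp this
      have hyx : y = -x := by rw [hxy]; simp
      have : ⟪y, e⟫ = -⟪x, e⟫ := by rw [hyx, inner_neg_left]
      linarith
  have h1c : (0 : ℝ) < 1 + c := by linarith
  set s : ℝ := Real.sqrt (2 + 2 * c) with hs
  have hspos : 0 < s := Real.sqrt_pos.mpr (by linarith)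
  have hs2 : s ^ 2 = 2 + 2 * c := Real.sq_sqrt (by linarith)
  set z : EuclideanSpace ℝ (Fin 3) := s⁻¹ • (x + y) with hz
  have hxy2 : ‖x + y‖ = s := by
    have : ‖x + y‖ ^ 2 = 2 + 2 * c := by
      rw [norm_add_sq_real, hx1, hy1, ← hc]; ring
    rw [hs, ← this, Real.sqrt_sq (norm_nonneg _)]
  have hz1 : ‖z‖ = 1 := by
    rw [hz, norm_smul, hxy2, norm_inv, Real.norm_eq_abs, abs_of_pos hspos,
      inv_mul_cancel₀ hspos.ne']
  have hxz : ⟪x, z⟫ = (1 + c) / s := by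
    rw [hz, real_inner_smul_right, inner_add_right, real_inner_self_eq_norm_sq, hx1, ← hc]
    ring
  have hzy : ⟪z, y⟫ = (1 + c) / s := by
    rw [hz, real_inner_smul_left, inner_add_left, real_inner_self_eq_norm_sq, hy1,
      ← hc]
    ring
  have hze : 0 < ⟪z, e⟫ := by
    rw [hz, real_inner_smul_left, inner_add_left]
    exact mul_pos (inv_pos.mpr hspos) (by linarith)
  -- arccos of the midpoint inner product is half the angle
  set θ : ℝ := Real.arccos c with hθ
  have hθ0 : 0 ≤ θ := Real.arccos_nonneg c
  have hθπ : θ ≤ Real.pi := Real.arccos_le_pi c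
  have hθpos : 0 < θ := by
    rcases lt_or_eq_of_le hθ0 with h | h
    · exact h
    · exfalso
      have : c = 1 := by
        have := Real.cos_arccos hcge hcle
        rw [← hθ, ← h, Real.cos_zero] at this
        linarith
      linarith
  have hcoshalf : Real.cos (θ / 2) = (1 + c) / s := by
    rw [hθ, Real.cos_half (by linarith [Real.pi_pos]) hθπ,
      Real.cos_arccos hcge hcle]
    have hne1c : (1 + c) ≠ 0 := h1c.ne'
    have hne2c : (2 : ℝ) + 2 * c ≠ 0 := by linarith
    have hsq : (1 + c) / 2 = ((1 + c) / s) ^ 2 := by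
      rw [div_pow, hs2]; field_simp
    rw [hsq, Real.sqrt_sq (div_nonneg h1c.le hspos.le)]
  have harccos : Real.arccos ((1 + c) / s) = θ / 2 := by
    rw [← hcoshalf, Real.arccos_cos (by linarith) (by linarith)]
  have hxzne : x ≠ z := by
    intro h
    have : ⟪x, z⟫ = 1 := by rw [← h, real_inner_self_eq_norm_sq, hx1]; norm_num
    rw [hxz] at this
    have : 1 + c = s := by field_simp at this; linarith
    have : (1 + c) ^ 2 = 2 + 2 * c := by rw [this, hs2]
    nlinarith
  have h1 : |f x - f z| < θ / 2 := by
    have := hCon x ⟨hx1, hxe⟩ z ⟨hz1, hze⟩ hxzne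
    rwa [hxz, harccos] at this
  have h2 : |f z - f y| ≤ θ / 2 := by
    have := hLip z ⟨hz1, hze.le⟩ y ⟨hy1, hye⟩
    rwa [hzy, harccos] at this
  calc |f x - f y| ≤ |f x - f z| + |f z - f y| := abs_sub_le _ _ _
    _ < θ / 2 + θ / 2 := add_lt_add_of_lt_of_le h1 h2
    _ = θ := by ring
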